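/- arXiv:1109.0609 — 2 statements merged into one kernel-verified Lean document; each statement's English description precedes it below -/
import Mathlib

section
/- Let 0 ≤ k < ∞. If f(z) = z + Σ_{n≥2} a_n z^n is analytic on the unit disk and satisfies Σ_{n≥2} n(n-1)|a_n| ≤ 1/(k+2), then k·|z f''(z)/f'(z)| < 1 + Re(z f''(z)/f'(z)) for all z in the unit disk, i.e., f is k-uniformly convex. -/
/-!
Write `f(z) = Σ a_n z^n`. On the unit disk `|f''(z)| ≤ Σ n(n-1)|a_n| =: T` and
`|f'(z) - 1| ≤ Σ_{n≥2} n|a_n| ≤ T`, so `w = z f''(z)/f'(z)` satisfies `|w| ≤ |z| T/(1 - T)`.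
The hypothesis `(k + 2) T ≤ 1` means `(k + 1) T ≤ 1 - T`, hence `(k + 1)|w| ≤ |z| < 1`, and then
`k|w| < 1 - |w| ≤ 1 + Re w`.
-/

open Metric Filter Topology

@[simp]
theorem Complex.norm_natCast_add_one (n : ℕ) : ‖(n : ℂ) + 1‖ = n + 1 := by
  exact_mod_cast Complex.norm_natCast (n + 1)

theorem norm_mul_pow_le_of_norm_le_one {x z : ℂ} (hz : ‖z‖ ≤ 1) (m : ℕ) : ‖x * z ^ m‖ ≤ ‖x‖ := by
  rw [norm_mul, norm_pow]
  exact mul_le_of_le_one_right (norm_nonneg x) (pow_le_one₀ (norm_nonneg z) hz)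

def derivCoeff (c : ℕ → ℂ) (n : ℕ) : ℂ := ((n : ℂ) + 1) * c (n + 1)

@[simp]
theorem norm_derivCoeff (c : ℕ → ℂ) (n : ℕ) : ‖derivCoeff c n‖ = (n + 1) * ‖c (n + 1)‖ := by
  simp [derivCoeff]

section PowerSeries

variable {c : ℕ → ℂ}

theorem norm_le_of_hasSum_mul_pow {z s : ℂ} {u : ℕ → ℝ} {t : ℝ}
    (hs : HasSum (fun n => c n * z ^ n) s) (hu : HasSum u t) (hcu : ∀ n, ‖c n‖ ≤ u n)
    (hz : ‖z‖ ≤ 1) : ‖s‖ ≤ t :=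
  hs.norm_le_of_bounded hu fun n => (norm_mul_pow_le_of_norm_le_one hz n).trans (hcu n)

theorem norm_sub_coeff_zero_le_of_hasSum_mul_pow {z s : ℂ} {u : ℕ → ℝ} {t : ℝ}
    (hs : HasSum (fun n => c n * z ^ n) s) (hu : HasSum u t) (hcu : ∀ n, ‖c (n + 1)‖ ≤ u n)
    (hz : ‖z‖ ≤ 1) : ‖s - c 0‖ ≤ t := by
  have hs' : HasSum (fun n => c (n + 1) * z ^ (n + 1)) (s - c 0) := by
    simpa using (hasSum_nat_add_iff' 1).mpr hs
  exact hs'.norm_le_of_bounded hu fun n =>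
    (norm_mul_pow_le_of_norm_le_one hz _).trans (hcu n)

theorem hasDerivAt_tsum_mul_pow (hc : Summable fun n : ℕ => (n : ℝ) * ‖c n‖) {z : ℂ}
    (hz : z ∈ ball (0 : ℂ) 1) :
    HasDerivAt (fun w => ∑' n, c n * w ^ n) (∑' n : ℕ, derivCoeff c n * z ^ n) z := by
  have hbound : ∀ (n : ℕ) (y : ℂ), y ∈ ball (0 : ℂ) 1 →
      ‖(n : ℂ) * c n * y ^ (n - 1)‖ ≤ n * ‖c n‖ := fun n y hy => by
    simpa using norm_mul_pow_le_of_norm_le_one (x := n * c n) (mem_ball_zero_iff.mp hy).le _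
  have hderiv := hasDerivAt_tsum_of_isPreconnected hc isOpen_ball
    (convex_ball (0 : ℂ) 1).isPreconnected
    (fun n y _ => ((hasDerivAt_pow n y).const_mul (c n)).congr_deriv (by ring)) hbound
    (mem_ball_self one_pos) (hasSum_single 0 fun n hn => by simp [hn]).summable hz
  rw [(Summable.of_norm_bounded hc fun n => hbound n z hz).tsum_eq_zero_add] at hderiv
  simpa [derivCoeff] using hderiv

theorem hasSum_deriv_of_hasSum_mul_pow {f : ℂ → ℂ}
    (hf : ∀ z ∈ ball (0 : ℂ) 1, HasSum (fun n => c n * z ^ n) (f z))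
    (hc : Summable fun n : ℕ => (n : ℝ) * ‖c n‖) :
    ∀ z ∈ ball (0 : ℂ) 1, HasSum (fun n => derivCoeff c n * z ^ n) (deriv f z) := by
  intro z hz
  have hfeq : f =ᶠ[𝓝 z] fun w => ∑' n, c n * w ^ n :=
    eventuallyEq_of_mem (isOpen_ball.mem_nhds hz) fun w hw => (hf w hw).tsum_eq.symm
  rw [hfeq.deriv_eq, (hasDerivAt_tsum_mul_pow hc hz).deriv]
  refine (Summable.of_norm_bounded ((summable_nat_add_iff 1).mpr hc) fun n => ?_).hasSum
  simpa using norm_mul_pow_le_of_norm_le_one (x := derivCoeff c n) (mem_ball_zero_iff.mp hz).le n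

end PowerSeries

section Coefficients

variable {a : ℕ → ℂ}

theorem hasSum_add_two_mul_add_one_mul_norm
    (hsum : Summable fun n : ℕ => (n : ℝ) * ((n : ℝ) - 1) * ‖a n‖) :
    HasSum (fun n : ℕ => ((n : ℝ) + 2) * ((n : ℝ) + 1) * ‖a (n + 2)‖)
      (∑' n : ℕ, (n : ℝ) * ((n : ℝ) - 1) * ‖a n‖) := by
  have h := (hasSum_nat_add_iff' 2).mpr hsum.hasSum
  norm_num [Finset.sum_range_succ, add_sub_assoc] at h
  exact h

theorem summable_natCast_mul_norm
    (hsum : Summable fun n : ℕ => (n : ℝ) * ((n : ℝ) - 1) * ‖a n‖) :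
    Summable fun n : ℕ => (n : ℝ) * ‖a n‖ := by
  refine (summable_nat_add_iff 2).mp
    ((hasSum_add_two_mul_add_one_mul_norm hsum).summable.of_nonneg_of_le
      (fun n => by positivity) fun n => ?_)
  push_cast
  nlinarith [mul_nonneg (n.cast_nonneg : (0 : ℝ) ≤ n) (norm_nonneg (a (n + 2)))]

theorem summable_natCast_mul_norm_derivCoeff
    (hsum : Summable fun n : ℕ => (n : ℝ) * ((n : ℝ) - 1) * ‖a n‖) :
    Summable fun n : ℕ => (n : ℝ) * ‖derivCoeff a n‖ := by
  refine ((summable_nat_add_iff 1).mpr hsum).congr fun n => ?_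
  rw [norm_derivCoeff]
  push_cast
  ring

end Coefficients

theorem mul_norm_lt_one_add_re {k : ℝ} {w : ℂ} (h : (k + 1) * ‖w‖ < 1) :
    k * ‖w‖ < 1 + w.re := by
  linarith [neg_le_of_abs_le (Complex.abs_re_le_norm w)]

theorem add_one_mul_norm_mul_div_lt_one {k T : ℝ} {z F₁ F₂ : ℂ} (hk : 0 ≤ k) (hz : ‖z‖ < 1)
    (hF₁ : ‖F₁ - 1‖ ≤ T) (hF₂ : ‖F₂‖ ≤ T) (hT : T * (k + 2) ≤ 1) :
    (k + 1) * ‖z * F₂ / F₁‖ < 1 := by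
  have hT₀ : 0 ≤ T := (norm_nonneg F₂).trans hF₂
  have hT₁ : T < 1 := by nlinarith
  have hF₁_ge : 1 - T ≤ ‖F₁‖ := by
    linarith [norm_sub_norm_le (1 : ℂ) F₁, norm_sub_rev (1 : ℂ) F₁, norm_one (α := ℂ)]
  rw [norm_div, norm_mul, mul_div_assoc', div_lt_one (by linarith)]
  calc (k + 1) * (‖z‖ * ‖F₂‖) = ‖z‖ * ((k + 1) * ‖F₂‖) := by ring
    _ ≤ ‖z‖ * ((k + 1) * T) := by gcongr
    _ ≤ ‖z‖ * (1 - T) := by gcongr; linarith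
    _ < 1 - T := mul_lt_of_lt_one_left (by linarith) hz
    _ ≤ ‖F₁‖ := hF₁_ge

theorem stmt_4_general (k : ℝ) (hk : 0 ≤ k) (a : ℕ → ℂ) (ha1 : a 1 = 1)
    (f : ℂ → ℂ)
    (hf : ∀ z ∈ ball (0 : ℂ) 1, HasSum (fun n : ℕ => a n * z ^ n) (f z))
    (hsum : Summable fun n : ℕ => (n : ℝ) * ((n : ℝ) - 1) * ‖a n‖)
    (h : (∑' n : ℕ, (n : ℝ) * ((n : ℝ) - 1) * ‖a n‖) ≤ 1 / (k + 2)) :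
    ∀ z ∈ ball (0 : ℂ) 1,
      k * ‖z * deriv (deriv f) z / deriv f z‖ <
        1 + (z * deriv (deriv f) z / deriv f z).re := by
  intro z hz
  have hz₁ : ‖z‖ < 1 := mem_ball_zero_iff.mp hz
  have hT := hasSum_add_two_mul_add_one_mul_norm hsum
  have hf' := hasSum_deriv_of_hasSum_mul_pow hf (summable_natCast_mul_norm hsum)
  have hf'' := hasSum_deriv_of_hasSum_mul_pow hf' (summable_natCast_mul_norm_derivCoeff hsum)
  have hF₁ : ‖deriv f z - 1‖ ≤ ∑' n : ℕ, (n : ℝ) * ((n : ℝ) - 1) * ‖a n‖ := by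
    simpa [derivCoeff, ha1] using norm_sub_coeff_zero_le_of_hasSum_mul_pow (hf' z hz) hT
      (fun n => by
        rw [norm_derivCoeff]
        push_cast
        nlinarith [mul_nonneg (n.cast_nonneg : (0 : ℝ) ≤ n) (norm_nonneg (a (n + 2)))])
      hz₁.le
  have hF₂ : ‖deriv (deriv f) z‖ ≤ ∑' n : ℕ, (n : ℝ) * ((n : ℝ) - 1) * ‖a n‖ :=
    norm_le_of_hasSum_mul_pow (hf'' z hz) hT
      (fun n => le_of_eq (by simp only [norm_derivCoeff]; push_cast; ring)) hz₁.le
  exact mul_norm_lt_one_add_re <| add_one_mul_norm_mul_div_lt_one hk hz₁ hF₁ hF₂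
    ((le_div_iff₀ (by linarith)).mp h)

/-- If `f(z) = z + Σ_{n≥2} a_n z^n` satisfies `Σ_{n≥2} n(n-1)|a_n| ≤ 1/(k+2)` with
`k ≥ 0`, then `k|z f''(z)/f'(z)| < 1 + Re(z f''(z)/f'(z))` on the unit disk,
i.e. `f` is `k`-uniformly convex. -/
theorem stmt_4 (k : ℝ) (hk : 0 ≤ k) (a : ℕ → ℂ) (ha0 : a 0 = 0) (ha1 : a 1 = 1)
    (f : ℂ → ℂ)
    (hf : ∀ z ∈ ball (0 : ℂ) 1, HasSum (fun n : ℕ => a n * z ^ n) (f z))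
    (hsum : Summable fun n : ℕ => (n : ℝ) * ((n : ℝ) - 1) * ‖a n‖)
    (h : (∑' n : ℕ, (n : ℝ) * ((n : ℝ) - 1) * ‖a n‖) ≤ 1 / (k + 2)) :
    ∀ z ∈ ball (0 : ℂ) 1,
      k * ‖z * deriv (deriv f) z / deriv f z‖ <
        1 + (z * deriv (deriv f) z / deriv f z).re :=
  stmt_4_general k hk a ha1 f hf hsum h
end

section
/- Let α > 0, 0 ≤ α ≤ 1, β ≥ 2(1-α), β < 1. If the nonnegative reals a_n (n ≥ 2) satisfy Σ_{n≥2} (αn² + (1-α)n - β) a_n ≤ 1-β, then Σ_{n≥2} n² a_n ≤ 4(1-β)/(2α+2-β). -/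
/-! For `n ≥ 2` the coefficient `αn² + (1-α)n - β` dominates `(2α+2-β)n²/4` termwise, because
`4(αn² + (1-α)n - β) - (2α+2-β)n² = (n - 2)((β - 2(1-α))n + 2β)`. Multiplying the hypothesis
by `4/(2α+2-β)` then bounds `Σ n² aₙ`. -/

lemma sq_mul_le_four_mul_coeff {α β x : ℝ} (hα1 : α ≤ 1) (hβ : 2 * (1 - α) ≤ β) (hx : 2 ≤ x) :
    x ^ 2 * (2 * α + 2 - β) ≤ 4 * (α * x ^ 2 + (1 - α) * x - β) := by
  have hfactor : 4 * (α * x ^ 2 + (1 - α) * x - β) - x ^ 2 * (2 * α + 2 - β) =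
      (x - 2) * ((β - 2 * (1 - α)) * x + 2 * β) := by ring
  have hnonneg : 0 ≤ (x - 2) * ((β - 2 * (1 - α)) * x + 2 * β) :=
    mul_nonneg (by linarith) (by nlinarith)
  linarith

lemma summable_and_tsum_le_mul_of_le_mul {f g : ℕ → ℝ} {c B : ℝ} (hc : 0 ≤ c)
    (hf : ∀ n, 0 ≤ f n) (hfg : ∀ n, f n ≤ c * g n) (hg : Summable g) (hB : ∑' n, g n ≤ B) :
    Summable f ∧ ∑' n, f n ≤ c * B := by
  have hf_sum : Summable f := hg.mul_left c |>.of_nonneg_of_le hf hfg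
  refine ⟨hf_sum, ?_⟩
  calc ∑' n, f n ≤ ∑' n, c * g n := hf_sum.tsum_le_tsum hfg (hg.mul_left c)
    _ = c * ∑' n, g n := tsum_mul_left
    _ ≤ c * B := mul_le_mul_of_nonneg_left hB hc

/-- If `a_n ≥ 0` and `Σ_{n≥2} (αn²+(1-α)n-β)a_n ≤ 1-β` then
`Σ_{n≥2} n² a_n ≤ 4(1-β)/(2α+2-β)`. -/
theorem stmt_18 (α β : ℝ) (hα0 : 0 < α) (hα1 : α ≤ 1) (hβ0 : 2 * (1 - α) ≤ β)
    (hβ1 : β < 1) (a : ℕ → ℝ) (han : ∀ n, 0 ≤ a n)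
    (hsum : Summable fun n : ℕ =>
      (α * ((n : ℝ) + 2) ^ 2 + (1 - α) * ((n : ℝ) + 2) - β) * a (n + 2))
    (h : (∑' n : ℕ, (α * ((n : ℝ) + 2) ^ 2 + (1 - α) * ((n : ℝ) + 2) - β) * a (n + 2))
      ≤ 1 - β) :
    (Summable fun n : ℕ => ((n : ℝ) + 2) ^ 2 * a (n + 2)) ∧
      (∑' n : ℕ, ((n : ℝ) + 2) ^ 2 * a (n + 2)) ≤ 4 * (1 - β) / (2 * α + 2 - β) := by
  have hden : 0 < 2 * α + 2 - β := by linarith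
  have hterm : ∀ n : ℕ, ((n : ℝ) + 2) ^ 2 * a (n + 2) ≤ 4 / (2 * α + 2 - β) *
      ((α * ((n : ℝ) + 2) ^ 2 + (1 - α) * ((n : ℝ) + 2) - β) * a (n + 2)) := by
    intro n
    have hcoeff := sq_mul_le_four_mul_coeff hα1 hβ0 (le_add_of_nonneg_left n.cast_nonneg)
    rw [← mul_assoc, div_mul_eq_mul_div, div_mul_eq_mul_div, le_div_iff₀ hden]
    linarith [mul_le_mul_of_nonneg_right hcoeff (han (n + 2))]
  rw [mul_div_right_comm]
  exact summable_and_tsum_le_mul_of_le_mul (by positivity)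
    (fun n => mul_nonneg (sq_nonneg _) (han _)) hterm hsum h
end
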